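/- Under Assumption A, there exist τ₀ > 0 and Q > 0, depending only on d, k, L, β, γ, ‖x₀‖ and T, such that for every N ∈ ℕ with τ = T/N ≤ τ₀, the iterates of the discrete HiSD scheme satisfy, for all 1 ≤ i ≤ k and 1 ≤ n ≤ N, ‖τ γ Σ_{j=1}^{i−1} (v_{i,n−1}ᵀ J(x_{n−1})ᵀ v_{j,n}) v_{j,n} − τ γ Σ_{j=1}^{i−1} (v_{i,n−1}ᵀ J(x_{n−1})ᵀ v_{j,n−1}) v_{j,n−1}‖ ≤ Q τ². -/

import Mathlib

/-!
The iterates stay bounded: `I - 2 ∑ⱼ vⱼ vⱼᵀ` is an isometry for orthonormal `vⱼ`, so `1 + ‖xₙ‖`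
grows by at most the factor `1 + βLτ ≤ exp (βLτ)` per step, and `‖J xₙ‖ ≤ ‖J 0‖ + L ‖xₙ‖` is bounded
by some `M` for all `n ≤ N`. Hence `ṽᵢ` lies within `δ = τγM` of `vᵢ,ₙ₋₁`, and Gram–Schmidt is stable
around an orthonormal family: the errors `eᵢ = ‖vᵢ,ₙ - vᵢ,ₙ₋₁‖` satisfy `eᵢ ≤ 2 (kδ + ∑_{j<i} eⱼ)`,
so `eᵢ ≤ 2kδ 3ⁱ = O(τ)`. Each rank-one term `⟪y, vⱼ⟫ vⱼ` therefore moves by `O(τ)`, and the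
prefactor `τγ` yields `O(τ²)`.
-/

open Finset
open scoped RealInnerProductSpace

variable {E : Type*} [NormedAddCommGroup E] [InnerProductSpace ℝ E]

lemma inner_sub_sum_inner_smul_eq_zero {ι : Type*} [DecidableEq ι] {s : Finset ι} {u : ι → E}
    {j : ι} (hj : j ∈ s) (hu : ∀ l ∈ s, ⟪u l, u j⟫ = if l = j then 1 else 0) (x : E) :
    ⟪x - ∑ l ∈ s, ⟪x, u l⟫ • u l, u j⟫ = 0 := by
  simp only [inner_sub_left, sum_inner, real_inner_smul_left]
  rw [sum_congr rfl fun l hl => by rw [hu l hl]]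
  simp [hj]

lemma Orthonormal.norm_sub_two_smul_sum_inner_smul {ι : Type*} [Fintype ι] {v : ι → E}
    (hv : Orthonormal ℝ v) (y : E) :
    ‖y - (2 : ℝ) • ∑ j, ⟪v j, y⟫ • v j‖ = ‖y‖ := by
  classical
  set p := ∑ j, ⟪v j, y⟫ • v j
  have hres : ∀ j, ⟪y - p, v j⟫ = 0 := fun j => by
    simpa only [real_inner_comm _ y] using inner_sub_sum_inner_smul_eq_zero (mem_univ j)
      (fun l _ => orthonormal_iff_ite.mp hv l j) y
  have hp : ⟪y - p, p⟫ = 0 := by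
    simp only [p, inner_sum, real_inner_smul_right, hres, mul_zero, sum_const_zero]
  have hsq : ‖(y - p) - p‖ * ‖(y - p) - p‖ = ‖(y - p) + p‖ * ‖(y - p) + p‖ := by
    rw [norm_sub_sq_eq_norm_sq_add_norm_sq_real hp, norm_add_sq_eq_norm_sq_add_norm_sq_real hp]
  rwa [sub_add_cancel, sub_sub, ← two_smul ℝ p, mul_self_inj (norm_nonneg _) (norm_nonneg _)]
    at hsq

lemma norm_inv_norm_smul_sub_le {w u : E} (hu : ‖u‖ = 1) : ‖‖w‖⁻¹ • w - u‖ ≤ 2 * ‖w - u‖ := by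
  have hnormalize : ‖‖w‖⁻¹ • w - w‖ ≤ ‖w - u‖ := by
    rcases eq_or_ne w 0 with rfl | hw
    · simp
    have hw' : ‖w‖ ≠ 0 := norm_ne_zero_iff.mpr hw
    calc ‖‖w‖⁻¹ • w - w‖ = ‖(‖w‖⁻¹ - 1) • w‖ := by rw [sub_smul, one_smul]
      _ = |(‖w‖⁻¹ - 1) * ‖w‖| := by rw [norm_smul, Real.norm_eq_abs, abs_mul, abs_norm]
      _ = |‖u‖ - ‖w‖| := by rw [sub_mul, inv_mul_cancel₀ hw', one_mul, hu]
      _ ≤ ‖w - u‖ := by rw [norm_sub_rev]; exact abs_norm_sub_norm_le u w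
  linarith [norm_sub_le_norm_sub_add_norm_sub (‖w‖⁻¹ • w) w u]

lemma abs_real_inner_le_of_inner_eq_zero {a b a' b' : E} (hab : ⟪a, b⟫ = 0) (ha : ‖a‖ ≤ 1)
    (hb' : ‖b'‖ ≤ 1) : |⟪a', b'⟫| ≤ ‖a' - a‖ + ‖b' - b‖ := by
  have hsplit : ⟪a', b'⟫ = ⟪a' - a, b'⟫ + ⟪a, b' - b⟫ := by
    rw [inner_sub_left, inner_sub_right, hab]; ring
  calc |⟪a', b'⟫| ≤ ‖a' - a‖ * ‖b'‖ + ‖a‖ * ‖b' - b‖ := by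
        rw [hsplit]
        exact (abs_add_le _ _).trans
          (add_le_add (abs_real_inner_le_norm _ _) (abs_real_inner_le_norm _ _))
    _ ≤ ‖a' - a‖ + ‖b' - b‖ := by
        gcongr
        · exact mul_le_of_le_one_right (norm_nonneg _) hb'
        · exact mul_le_of_le_one_left (norm_nonneg _) ha

lemma norm_inner_smul_sub_inner_smul_le {a b : E} (ha : ‖a‖ ≤ 1) (hb : ‖b‖ ≤ 1) (y : E) :
    ‖⟪y, a⟫ • a - ⟪y, b⟫ • b‖ ≤ 2 * ‖y‖ * ‖a - b‖ := by
  have hsplit : ⟪y, a⟫ • a - ⟪y, b⟫ • b = ⟪y, a⟫ • (a - b) + ⟪y, a - b⟫ • b := by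
    rw [inner_sub_right, smul_sub, sub_smul]; abel
  rw [hsplit]
  refine (norm_add_le _ _).trans ?_
  rw [norm_smul, norm_smul, Real.norm_eq_abs, Real.norm_eq_abs]
  have h₁ := abs_real_inner_le_norm y a
  have h₂ := abs_real_inner_le_norm y (a - b)
  calc |⟪y, a⟫| * ‖a - b‖ + |⟪y, a - b⟫| * ‖b‖
      ≤ ‖y‖ * ‖a‖ * ‖a - b‖ + ‖y‖ * ‖a - b‖ * ‖b‖ := by gcongr
    _ ≤ ‖y‖ * 1 * ‖a - b‖ + ‖y‖ * ‖a - b‖ * 1 := by gcongr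
    _ = 2 * ‖y‖ * ‖a - b‖ := by ring

lemma le_two_mul_mul_three_pow {k : ℕ} {e : Fin k → ℝ} {c : ℝ}
    (h : ∀ i, e i ≤ 2 * (c + ∑ j ∈ Iio i, e j)) (i : Fin k) : e i ≤ 2 * c * 3 ^ (i : ℕ) := by
  induction i using WellFoundedLT.induction with
  | _ i ih =>
    have hgeom : (∑ j ∈ Iio i, (3 : ℝ) ^ (j : ℕ)) * 2 = 3 ^ (i : ℕ) - 1 := by
      have hrange : ∑ j ∈ Iio i, (3 : ℝ) ^ (j : ℕ) = ∑ m ∈ range i, (3 : ℝ) ^ m := by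
        rw [← Nat.Iio_eq_range, ← Fin.map_valEmbedding_Iio, sum_map]; rfl
      rw [hrange, ← geom_sum_mul]; norm_num
    calc e i ≤ 2 * (c + ∑ j ∈ Iio i, 2 * c * 3 ^ (j : ℕ)) := by
          grw [h i]; gcongr with j hj; exact ih j (mem_Iio.mp hj)
      _ = 2 * c * 3 ^ (i : ℕ) := by
          rw [← mul_sum]; linear_combination (2 * c) * hgeom

def IsGramSchmidt {k : ℕ} (u v' : Fin k → E) : Prop :=
  ∀ i, let w := u i - ∑ j ∈ Iio i, ⟪u i, v' j⟫ • v' j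
    w ≠ 0 ∧ v' i = ‖w‖⁻¹ • w

namespace IsGramSchmidt

variable {k : ℕ} {u v v' : Fin k → E}

lemma norm_eq_one (hGS : IsGramSchmidt u v') (i : Fin k) : ‖v' i‖ = 1 := by
  obtain ⟨hw, hv'⟩ := hGS i
  rw [hv', norm_smul, norm_inv, norm_norm, inv_mul_cancel₀ (norm_ne_zero_iff.mpr hw)]

lemma inner_eq_zero_of_lt (hGS : IsGramSchmidt u v') {i j : Fin k} (hji : j < i) :
    ⟪v' i, v' j⟫ = 0 := by
  induction i using WellFoundedLT.induction generalizing j with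
  | _ i ih =>
    have hbelow : ∀ l ∈ Iio i, ⟪v' l, v' j⟫ = if l = j then 1 else 0 := by
      intro l hl
      rcases lt_trichotomy l j with hlj | rfl | hjl
      · rw [real_inner_comm, ih j hji hlj, if_neg hlj.ne]
      · rw [real_inner_self_eq_norm_sq, hGS.norm_eq_one, if_pos rfl, one_pow]
      · rw [ih l (mem_Iio.mp hl) hjl, if_neg hjl.ne']
    rw [(hGS i).2, real_inner_smul_left,
      inner_sub_sum_inner_smul_eq_zero (mem_Iio.mpr hji) hbelow, mul_zero]

lemma orthonormal (hGS : IsGramSchmidt u v') : Orthonormal ℝ v' := by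
  refine ⟨hGS.norm_eq_one, fun i j hij => ?_⟩
  rcases hij.lt_or_gt with hij | hji
  · rw [real_inner_comm]; exact hGS.inner_eq_zero_of_lt hij
  · exact hGS.inner_eq_zero_of_lt hji

lemma norm_sub_le (hGS : IsGramSchmidt u v') (hv : Orthonormal ℝ v) {δ : ℝ}
    (hu : ∀ i, ‖u i - v i‖ ≤ δ) (i : Fin k) : ‖v' i - v i‖ ≤ 2 * k * 3 ^ k * δ := by
  have hδ : 0 ≤ δ := (norm_nonneg _).trans (hu i)
  have hcoef : ∀ i, ∀ j ∈ Iio i, ‖⟪u i, v' j⟫ • v' j‖ ≤ δ + ‖v' j - v j‖ := by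
    intro i j hj
    rw [norm_smul, hGS.norm_eq_one, mul_one, Real.norm_eq_abs]
    exact (abs_real_inner_le_of_inner_eq_zero (hv.2 (mem_Iio.mp hj).ne') (hv.1 i).le
      (hGS.norm_eq_one j).le).trans (by grw [hu i])
  have hstep : ∀ i, ‖v' i - v i‖ ≤ 2 * (k * δ + ∑ j ∈ Iio i, ‖v' j - v j‖) := by
    intro i
    set w := u i - ∑ j ∈ Iio i, ⟪u i, v' j⟫ • v' j
    have hwv : ‖w - v i‖ ≤ k * δ + ∑ j ∈ Iio i, ‖v' j - v j‖ := by
      calc ‖w - v i‖ = ‖(u i - v i) - ∑ j ∈ Iio i, ⟪u i, v' j⟫ • v' j‖ := by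
            rw [sub_right_comm]
        _ ≤ δ + ∑ j ∈ Iio i, (δ + ‖v' j - v j‖) := by
            grw [_root_.norm_sub_le, hu i, norm_sum_le, sum_le_sum (hcoef i)]
        _ = (1 + i) * δ + ∑ j ∈ Iio i, ‖v' j - v j‖ := by
            rw [sum_add_distrib, sum_const, Fin.card_Iio, nsmul_eq_mul]; ring
        _ ≤ k * δ + ∑ j ∈ Iio i, ‖v' j - v j‖ := by
            gcongr; exact_mod_cast Nat.one_add_le_iff.mpr i.isLt
    rw [(hGS i).2]
    exact (norm_inv_norm_smul_sub_le (hv.1 i)).trans (by gcongr)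
  calc ‖v' i - v i‖ ≤ 2 * (k * δ) * 3 ^ (i : ℕ) := le_two_mul_mul_three_pow hstep i
    _ ≤ 2 * (k * δ) * 3 ^ k := by gcongr; exacts [by norm_num, i.isLt.le]
    _ = 2 * k * 3 ^ k * δ := by ring

end IsGramSchmidt

lemma norm_smul_sum_sub_smul_sum_le_of_isGramSchmidt {k : ℕ} {v v' : Fin k → E}
    {A : E →L[ℝ] E} {h M : ℝ} (hh : 0 ≤ h) (hv : Orthonormal ℝ v) (hA : ‖A‖ ≤ M)
    (hGS : IsGramSchmidt (fun i => v i + h • A (v i)) v') (i : Fin k) :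
    ‖h • ∑ j ∈ Iio i, ⟪A (v i), v' j⟫ • v' j - h • ∑ j ∈ Iio i, ⟪A (v i), v j⟫ • v j‖ ≤
      4 * k ^ 2 * 3 ^ k * M ^ 2 * h ^ 2 := by
  have hAv : ∀ i, ‖A (v i)‖ ≤ M := fun i =>
    (A.le_opNorm _).trans (by rw [hv.1 i, mul_one]; exact hA)
  have hM : 0 ≤ M := (norm_nonneg _).trans hA
  have hu : ∀ i, ‖(v i + h • A (v i)) - v i‖ ≤ h * M := fun i => by
    rw [add_sub_cancel_left, norm_smul, Real.norm_of_nonneg hh]; gcongr; exact hAv i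
  have hv'v := hGS.norm_sub_le hv hu
  rw [← smul_sub, ← sum_sub_distrib, norm_smul, Real.norm_of_nonneg hh]
  calc h * ‖∑ j ∈ Iio i, (⟪A (v i), v' j⟫ • v' j - ⟪A (v i), v j⟫ • v j)‖
      ≤ h * ∑ j ∈ Iio i, 2 * M * (2 * k * 3 ^ k * (h * M)) := by
        grw [norm_sum_le]
        gcongr with j
        grw [norm_inner_smul_sub_inner_smul_le (hGS.orthonormal.1 j).le (hv.1 j).le, hAv i,
          hv'v j]
    _ ≤ h * (k * (2 * M * (2 * k * 3 ^ k * (h * M)))) := by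
        rw [sum_const, Fin.card_Iio, nsmul_eq_mul]
        gcongr
        exact_mod_cast i.isLt.le
    _ = 4 * k ^ 2 * 3 ^ k * M ^ 2 * h ^ 2 := by ring

lemma one_add_norm_le_exp_of_hisd {ι : Type*} [Fintype ι] {F : E → E} {L β τ : ℝ} {N : ℕ}
    {x : ℕ → E} {v : ℕ → ι → E} (hβ : 0 ≤ β) (hτ : 0 ≤ τ)
    (hgrow : ∀ y, ‖F y‖ ≤ L * (1 + ‖y‖)) (hv : ∀ n < N, Orthonormal ℝ (v n))
    (hx : ∀ n < N, x (n + 1) = x n + τ • (β • (F (x n) - (2 : ℝ) • ∑ j, ⟪v n j, F (x n)⟫ • v n j)))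
    (n : ℕ) (hn : n ≤ N) : 1 + ‖x n‖ ≤ Real.exp (β * L * τ * n) * (1 + ‖x 0‖) := by
  induction n with
  | zero => simp
  | succ n ih =>
    have hstep : ‖x (n + 1) - x n‖ ≤ β * L * τ * (1 + ‖x n‖) := by
      rw [hx n hn, add_sub_cancel_left, norm_smul, norm_smul,
        (hv n hn).norm_sub_two_smul_sum_inner_smul, Real.norm_of_nonneg hτ,
        Real.norm_of_nonneg hβ]
      grw [hgrow]
      exact le_of_eq (by ring)
    calc 1 + ‖x (n + 1)‖ ≤ (1 + β * L * τ) * (1 + ‖x n‖) := by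
          linarith [norm_le_insert' (x (n + 1)) (x n)]
      _ ≤ Real.exp (β * L * τ) * (Real.exp (β * L * τ * n) * (1 + ‖x 0‖)) := by
          gcongr
          · linarith [Real.add_one_le_exp (β * L * τ)]
          · exact ih (by omega)
      _ = Real.exp (β * L * τ * (n + 1 : ℕ)) * (1 + ‖x 0‖) := by
          rw [← mul_assoc, ← Real.exp_add]; push_cast; ring_nf

theorem hisd_stmt6_general
    (d k : ℕ)
    (F : EuclideanSpace ℝ (Fin d) → EuclideanSpace ℝ (Fin d))
    (J : EuclideanSpace ℝ (Fin d) → (EuclideanSpace ℝ (Fin d) →L[ℝ] EuclideanSpace ℝ (Fin d)))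
    (L : ℝ) (hL : 0 < L)
    (hLip : ∀ x₁ x₂ : EuclideanSpace ℝ (Fin d), ‖J x₂ - J x₁‖ + ‖F x₂ - F x₁‖ ≤ L * ‖x₂ - x₁‖)
    (hgrow : ∀ x : EuclideanSpace ℝ (Fin d), ‖F x‖ ≤ L * (1 + ‖x‖))
    (β γ : ℝ) (hβ : 0 < β) (hγ : 0 < γ)
    (T : ℝ) (hT : 0 < T)
    (x₀ : EuclideanSpace ℝ (Fin d))
    (v₀ : Fin k → EuclideanSpace ℝ (Fin d))
    (hv₀ : ∀ i j : Fin k, ⟪v₀ i, v₀ j⟫ = if i = j then (1:ℝ) else 0) :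
    ∃ τ₀ > (0:ℝ), ∃ Q > (0:ℝ), ∀ (N : ℕ) (τ : ℝ), 0 < N → τ = T / N → τ ≤ τ₀ →
      ∀ (x : ℕ → EuclideanSpace ℝ (Fin d)) (v : ℕ → Fin k → EuclideanSpace ℝ (Fin d)),
        x 0 = x₀ → v 0 = v₀ →
        (∀ n < N, x (n+1) = x n + τ •
            (β • (F (x n) - (2:ℝ) • ∑ j, ⟪v n j, F (x n)⟫ • v n j))) →
        (∀ n < N, ∀ i : Fin k,
          let vt := v n i + (τ * γ) • J (x n) (v n i)
          let w := vt - ∑ j ∈ Finset.Iio i, ⟪vt, v (n+1) j⟫ • v (n+1) j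
          w ≠ 0 ∧ v (n+1) i = ‖w‖⁻¹ • w) →
        ∀ n < N, ∀ i : Fin k,
          ‖(τ * γ) • (∑ j ∈ Finset.Iio i, ⟪J (x n) (v n i), v (n+1) j⟫ • v (n+1) j) -
            (τ * γ) • (∑ j ∈ Finset.Iio i, ⟪J (x n) (v n i), v n j⟫ • v n j)‖ ≤ Q * τ^2 := by
  set B := Real.exp (β * L * T) * (1 + ‖x₀‖)
  set M := ‖J 0‖ + L * B
  refine ⟨1, one_pos, 4 * k ^ 2 * 3 ^ k * M ^ 2 * γ ^ 2 + 1, by positivity, ?_⟩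
  intro N τ hN hτ _ x v hx0 hv0 hx hGS n hn i
  have hτN : τ * N = T := by rw [hτ]; field_simp
  have hτ0 : 0 ≤ τ := by rw [hτ]; positivity
  have hv : ∀ n ≤ N, Orthonormal ℝ (v n) := by
    rintro (_ | n) hn
    · exact hv0 ▸ orthonormal_iff_ite.mpr hv₀
    · exact IsGramSchmidt.orthonormal (hGS n hn)
  have hxB : 1 + ‖x n‖ ≤ B := by
    grw [one_add_norm_le_exp_of_hisd hβ.le hτ0 hgrow (fun n hn => hv n hn.le) hx n hn.le,
      hx0]
    simp only [B]
    gcongr Real.exp ?_ * _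
    calc β * L * τ * n ≤ β * L * (τ * N) := by rw [mul_assoc (β * L)]; gcongr
      _ = β * L * T := by rw [hτN]
  have hJ : ‖J (x n)‖ ≤ M := by
    have hLip₀ := hLip 0 (x n)
    rw [sub_zero] at hLip₀
    calc ‖J (x n)‖ ≤ ‖J 0‖ + ‖J (x n) - J 0‖ := norm_le_insert' _ _
      _ ≤ ‖J 0‖ + L * ‖x n‖ := by linarith [norm_nonneg (F (x n) - F 0)]
      _ ≤ ‖J 0‖ + L * B := by gcongr; linarith
  calc _ ≤ 4 * k ^ 2 * 3 ^ k * M ^ 2 * (τ * γ) ^ 2 :=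
        norm_smul_sum_sub_smul_sum_le_of_isGramSchmidt (by positivity) (hv n hn.le) hJ
          (hGS n hn) i
    _ = (4 * k ^ 2 * 3 ^ k * M ^ 2 * γ ^ 2) * τ ^ 2 := by ring
    _ ≤ _ := by gcongr; linarith

theorem hisd_stmt6
    (d k : ℕ) (hd : 1 ≤ d) (hk : 1 ≤ k) (hkd : k ≤ d)
    (F : EuclideanSpace ℝ (Fin d) → EuclideanSpace ℝ (Fin d))
    (J : EuclideanSpace ℝ (Fin d) → (EuclideanSpace ℝ (Fin d) →L[ℝ] EuclideanSpace ℝ (Fin d)))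
    (hJsymm : ∀ x u w, ⟪J x u, w⟫ = ⟪u, J x w⟫)
    (L : ℝ) (hL : 0 < L)
    (hLip : ∀ x₁ x₂ : EuclideanSpace ℝ (Fin d), ‖J x₂ - J x₁‖ + ‖F x₂ - F x₁‖ ≤ L * ‖x₂ - x₁‖)
    (hgrow : ∀ x : EuclideanSpace ℝ (Fin d), ‖F x‖ ≤ L * (1 + ‖x‖))
    (β γ : ℝ) (hβ : 0 < β) (hγ : 0 < γ)
    (T : ℝ) (hT : 0 < T)
    (x₀ : EuclideanSpace ℝ (Fin d))
    (v₀ : Fin k → EuclideanSpace ℝ (Fin d))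
    (hv₀ : ∀ i j : Fin k, ⟪v₀ i, v₀ j⟫ = if i = j then (1:ℝ) else 0) :
    ∃ τ₀ > (0:ℝ), ∃ Q > (0:ℝ), ∀ (N : ℕ) (τ : ℝ), 0 < N → τ = T / N → τ ≤ τ₀ →
      ∀ (x : ℕ → EuclideanSpace ℝ (Fin d)) (v : ℕ → Fin k → EuclideanSpace ℝ (Fin d)),
        x 0 = x₀ → v 0 = v₀ →
        (∀ n < N, x (n+1) = x n + τ •
            (β • (F (x n) - (2:ℝ) • ∑ j, ⟪v n j, F (x n)⟫ • v n j))) →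
        (∀ n < N, ∀ i : Fin k,
          let vt := v n i + (τ * γ) • J (x n) (v n i)
          let w := vt - ∑ j ∈ Finset.Iio i, ⟪vt, v (n+1) j⟫ • v (n+1) j
          w ≠ 0 ∧ v (n+1) i = ‖w‖⁻¹ • w) →
        ∀ n < N, ∀ i : Fin k,
          ‖(τ * γ) • (∑ j ∈ Finset.Iio i, ⟪J (x n) (v n i), v (n+1) j⟫ • v (n+1) j) -
            (τ * γ) • (∑ j ∈ Finset.Iio i, ⟪J (x n) (v n i), v n j⟫ • v n j)‖ ≤ Q * τ^2 :=
  hisd_stmt6_general d k F J L hL hLip hgrow β γ hβ hγ T hT x₀ v₀ hv₀
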